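/- Assume ‖x_i‖₂ ≤ 1 for all i, ‖J_{W₀,x_i}‖_F ≤ C₀ for all i (a constant), and λ_min(G_{W₀}) ≥ (3/4) λ₀ with λ₀ > 0. Then there exists a constant C' > 0, depending only on ℓ, β, C₀, such that if M ≥ C' n² R²/λ₀², then for every W ∈ B(R): ‖G_W − G_{W₀}‖₂ ≤ λ₀/4; in particular G_W is invertible with least eigenvalue at least λ₀/2 and ‖G_W^{-1}‖₂ ≤ 2/λ₀. -/

import Mathlib

open Matrix

/-- Euclidean norm of a real vector. -/
noncomputable def eNorm {n : Type*} [Fintype n] (v : n → ℝ) : ℝ :=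
  Real.sqrt (∑ i, v i ^ 2)

/-- Frobenius norm of a real matrix. -/
noncomputable def frobNorm {m n : Type*} [Fintype m] [Fintype n] (A : Matrix m n ℝ) : ℝ :=
  Real.sqrt (∑ i, ∑ j, A i j ^ 2)

/-- Spectral (ℓ²-operator) norm of a real matrix. -/
noncomputable def specNorm {m n : Type*} [Fintype m] [Fintype n] [DecidableEq n]
    (A : Matrix m n ℝ) : ℝ :=
  ‖LinearMap.toContinuousLinearMap (Matrix.toEuclideanLin A)‖

/-- The gradient `J_{W,x} = ∂f(W,x)/∂W = (1/√M)(σ'(Wx) ∘ a) xᵀ ∈ ℝ^{M×d}`. -/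
noncomputable def jacSingle (M d : ℕ) (σ' : ℝ → ℝ) (a : Fin M → ℝ)
    (W : Fin M → Fin d → ℝ) (x : Fin d → ℝ) : Matrix (Fin M) (Fin d) ℝ :=
  Matrix.of fun r j => (Real.sqrt M)⁻¹ * (σ' (W r ⬝ᵥ x) * a r) * x j

/-- The stacked Jacobian `𝐉_W ∈ ℝ^{n×(Md)}`, row `i` being `vec(J_{W,x_i})ᵀ`. -/
noncomputable def jacStack (M d n : ℕ) (σ' : ℝ → ℝ) (a : Fin M → ℝ)
    (x : Fin n → Fin d → ℝ) (W : Fin M → Fin d → ℝ) :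
    Matrix (Fin n) (Fin M × Fin d) ℝ :=
  Matrix.of fun i rj => jacSingle M d σ' a W (x i) rj.1 rj.2

/-- The Gram matrix `G_W = 𝐉_W 𝐉_Wᵀ ∈ ℝ^{n×n}`. -/
noncomputable def gramStack (M d n : ℕ) (σ' : ℝ → ℝ) (a : Fin M → ℝ)
    (x : Fin n → Fin d → ℝ) (W : Fin M → Fin d → ℝ) : Matrix (Fin n) (Fin n) ℝ :=
  jacStack M d n σ' a x W * (jacStack M d n σ' a x W)ᵀ

/-! Each entry of `G_W` is `M⁻¹ ∑_r a_r² σ'(w_r ⬝ x_i) σ'(w_r ⬝ x_k) (x_i ⬝ x_k)`. Since `σ'` is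
bounded by `ℓ` and `β`-Lipschitz, the `r`-th summand moves by at most `2ℓβ ‖w_r - w₀_r‖` between
`W₀` and `W`, and `∑_r ‖w_r - w₀_r‖ ≤ √M R` by Cauchy–Schwarz. So every entry of `G_W - G_{W₀}` is
at most `2ℓβR/√M`, and its spectral norm, bounded by its Frobenius norm, is at most `2ℓβnR/√M`,
which is `≤ λ₀/4` once `M ≥ 16 (2ℓβ)² n²R²/λ₀²`. This perturbation lowers the coercivity constant
`3λ₀/4` of `G_{W₀}` to `λ₀/2` for `G_W`; a matrix with coercivity constant `c > 0` is invertible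
and its inverse has spectral norm at most `1/c`. -/

section Norms

variable {m n : Type*} [Fintype m] [Fintype n]

lemma eNorm_nonneg (v : n → ℝ) : 0 ≤ eNorm v := Real.sqrt_nonneg _

lemma sq_eNorm (v : n → ℝ) : eNorm v ^ 2 = ∑ i, v i ^ 2 :=
  Real.sq_sqrt (by positivity)

lemma abs_dotProduct_le_eNorm_mul (v w : n → ℝ) : |v ⬝ᵥ w| ≤ eNorm v * eNorm w := by
  rw [abs_le]
  constructor
  · have h := Real.sum_mul_le_sqrt_mul_sqrt Finset.univ (-v) w
    simp only [Pi.neg_apply, neg_mul, Finset.sum_neg_distrib, neg_sq] at h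
    exact neg_le.mp h
  · exact Real.sum_mul_le_sqrt_mul_sqrt Finset.univ v w

lemma norm_toLp_eq_eNorm (v : n → ℝ) : ‖WithLp.toLp 2 v‖ = eNorm v := by
  simp [EuclideanSpace.norm_eq, eNorm, Real.norm_eq_abs, sq_abs]

lemma frobNorm_le_of_abs_apply_le (A : Matrix m n ℝ) {K : ℝ} (hK : 0 ≤ K) (h : ∀ i j, |A i j| ≤ K) :
    frobNorm A ≤ Real.sqrt (Fintype.card m * Fintype.card n) * K := by
  have hsum : ∑ i, ∑ j, A i j ^ 2 ≤ Fintype.card m * Fintype.card n * K ^ 2 := by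
    calc ∑ i, ∑ j, A i j ^ 2 ≤ ∑ _i : m, ∑ _j : n, K ^ 2 :=
          Finset.sum_le_sum fun i _ => Finset.sum_le_sum fun j _ =>
            sq_le_sq.mpr ((h i j).trans (le_abs_self K))
      _ = Fintype.card m * Fintype.card n * K ^ 2 := by simp [mul_assoc]
  calc frobNorm A ≤ Real.sqrt (Fintype.card m * Fintype.card n * K ^ 2) := Real.sqrt_le_sqrt hsum
    _ = Real.sqrt (Fintype.card m * Fintype.card n) * K := by
        rw [Real.sqrt_mul (by positivity), Real.sqrt_sq hK]

lemma sum_eNorm_row_le_sqrt_card_mul_frobNorm (A : Matrix m n ℝ) :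
    ∑ i, eNorm (A i) ≤ Real.sqrt (Fintype.card m) * frobNorm A := by
  have h := Real.sum_mul_le_sqrt_mul_sqrt Finset.univ (fun _ => (1 : ℝ)) fun i => eNorm (A i)
  simpa only [one_mul, one_pow, Finset.sum_const, Finset.card_univ, nsmul_eq_mul, mul_one,
    sq_eNorm, frobNorm] using h

variable [DecidableEq n]

lemma eNorm_mulVec_le_specNorm_mul (A : Matrix m n ℝ) (v : n → ℝ) :
    eNorm (A *ᵥ v) ≤ specNorm A * eNorm v := by
  simpa [specNorm, norm_toLp_eq_eNorm] using
    (LinearMap.toContinuousLinearMap (Matrix.toEuclideanLin A)).le_opNorm (WithLp.toLp 2 v)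

lemma specNorm_le_of_eNorm_mulVec_le (A : Matrix m n ℝ) {c : ℝ} (hc : 0 ≤ c)
    (h : ∀ v, eNorm (A *ᵥ v) ≤ c * eNorm v) : specNorm A ≤ c := by
  refine ContinuousLinearMap.opNorm_le_bound _ hc fun v => ?_
  simpa [← norm_toLp_eq_eNorm, toLpLin_apply] using h v.ofLp

lemma specNorm_le_frobNorm (A : Matrix m n ℝ) : specNorm A ≤ frobNorm A := by
  refine specNorm_le_of_eNorm_mulVec_le A (Real.sqrt_nonneg _) fun v => ?_
  have hrows : ∑ i, (A *ᵥ v) i ^ 2 ≤ (∑ i, ∑ j, A i j ^ 2) * ∑ j, v j ^ 2 := by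
    rw [Finset.sum_mul]
    exact Finset.sum_le_sum fun i _ => Finset.sum_mul_sq_le_sq_mul_sq _ (A i) v
  rw [frobNorm, eNorm, eNorm, ← Real.sqrt_mul (by positivity)]
  exact Real.sqrt_le_sqrt hrows

section Coercive

variable {n : Type*} [Fintype n] [DecidableEq n]

lemma abs_dotProduct_mulVec_le_specNorm_mul (A : Matrix n n ℝ) (v : n → ℝ) :
    |v ⬝ᵥ A *ᵥ v| ≤ specNorm A * ∑ i, v i ^ 2 := by
  calc |v ⬝ᵥ A *ᵥ v| ≤ eNorm v * eNorm (A *ᵥ v) := abs_dotProduct_le_eNorm_mul _ _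
    _ ≤ eNorm v * (specNorm A * eNorm v) :=
        mul_le_mul_of_nonneg_left (eNorm_mulVec_le_specNorm_mul A v) (eNorm_nonneg v)
    _ = specNorm A * ∑ i, v i ^ 2 := by rw [← sq_eNorm]; ring

lemma coercive_of_specNorm_sub_le {A B : Matrix n n ℝ} {c δ : ℝ}
    (hB : ∀ v, c * ∑ i, v i ^ 2 ≤ v ⬝ᵥ B *ᵥ v) (hAB : specNorm (A - B) ≤ δ) (v : n → ℝ) :
    (c - δ) * ∑ i, v i ^ 2 ≤ v ⬝ᵥ A *ᵥ v := by
  have hdiff : |v ⬝ᵥ A *ᵥ v - v ⬝ᵥ B *ᵥ v| ≤ δ * ∑ i, v i ^ 2 := by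
    rw [← dotProduct_sub, ← sub_mulVec]
    exact (abs_dotProduct_mulVec_le_specNorm_mul _ v).trans
      (mul_le_mul_of_nonneg_right hAB (by positivity))
  linarith [(abs_le.mp hdiff).1, hB v]

lemma isUnit_of_coercive {A : Matrix n n ℝ} {c : ℝ} (hc : 0 < c)
    (hA : ∀ v, c * ∑ i, v i ^ 2 ≤ v ⬝ᵥ A *ᵥ v) : IsUnit A := by
  rw [isUnit_iff_isUnit_det, isUnit_iff_ne_zero, ne_eq, ← exists_mulVec_eq_zero_iff.not]
  rintro ⟨v, hv, hAv⟩
  have hpos : 0 < ∑ i, v i ^ 2 := by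
    obtain ⟨i, hi⟩ := Function.ne_iff.mp hv
    exact Finset.sum_pos' (fun j _ => sq_nonneg _) ⟨i, Finset.mem_univ i, pow_two_pos_of_ne_zero hi⟩
  have := hA v
  rw [hAv, dotProduct_zero] at this
  nlinarith

lemma specNorm_inv_le_of_coercive {A : Matrix n n ℝ} {c : ℝ} (hc : 0 < c)
    (hA : ∀ v, c * ∑ i, v i ^ 2 ≤ v ⬝ᵥ A *ᵥ v) : specNorm A⁻¹ ≤ 1 / c := by
  refine specNorm_le_of_eNorm_mulVec_le _ (by positivity) fun w => ?_
  set u := A⁻¹ *ᵥ w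
  have hAu : A *ᵥ u = w := by
    rw [mulVec_mulVec, mul_nonsing_inv _ ((isUnit_iff_isUnit_det A).mp (isUnit_of_coercive hc hA)),
      one_mulVec]
  have hcu : c * eNorm u ^ 2 ≤ eNorm u * eNorm w := by
    rw [sq_eNorm, ← hAu]
    exact (hA u).trans ((le_abs_self _).trans (abs_dotProduct_le_eNorm_mul _ _))
  rw [one_div_mul_eq_div, le_div_iff₀ hc]
  nlinarith [eNorm_nonneg u, eNorm_nonneg w]

end Coercive

lemma abs_mul_sub_mul_le {f : ℝ → ℝ} {ℓ β : ℝ} (hℓ : ∀ t, |f t| ≤ ℓ)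
    (hβ : ∀ s t, |f s - f t| ≤ β * |s - t|) (s t s' t' : ℝ) :
    |f s * f t - f s' * f t'| ≤ ℓ * β * (|s - s'| + |t - t'|) := by
  have hℓ0 : 0 ≤ ℓ := (abs_nonneg _).trans (hℓ 0)
  have hsplit : f s * f t - f s' * f t' = f s * (f t - f t') + f t' * (f s - f s') := by ring
  calc |f s * f t - f s' * f t'| ≤ |f s| * |f t - f t'| + |f t'| * |f s - f s'| := by
        rw [hsplit, ← abs_mul, ← abs_mul]; exact abs_add_le _ _
    _ ≤ ℓ * (β * |t - t'|) + ℓ * (β * |s - s'|) :=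
        add_le_add (mul_le_mul (hℓ _) (hβ _ _) (abs_nonneg _) hℓ0)
          (mul_le_mul (hℓ _) (hβ _ _) (abs_nonneg _) hℓ0)
    _ = ℓ * β * (|s - s'| + |t - t'|) := by ring

lemma mul_nonneg_of_bounded_lipschitz {f : ℝ → ℝ} {ℓ β : ℝ} (hℓ : ∀ t, |f t| ≤ ℓ)
    (hβ : ∀ s t, |f s - f t| ≤ β * |s - t|) : 0 ≤ ℓ * β := by
  have hβ10 := hβ 1 0
  norm_num at hβ10
  exact mul_nonneg ((abs_nonneg _).trans (hℓ 0)) ((abs_nonneg _).trans hβ10)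

lemma abs_dotProduct_sub_dotProduct_le {n : Type*} [Fintype n] (w w₀ x : n → ℝ)
    (hx : eNorm x ≤ 1) : |w ⬝ᵥ x - w₀ ⬝ᵥ x| ≤ eNorm (w - w₀) := by
  rw [← sub_dotProduct]
  calc |(w - w₀) ⬝ᵥ x| ≤ eNorm (w - w₀) * eNorm x := abs_dotProduct_le_eNorm_mul _ _
    _ ≤ eNorm (w - w₀) := mul_le_of_le_one_right (eNorm_nonneg _) hx

section Gram

variable {M d n : ℕ} {σ' : ℝ → ℝ} {a : Fin M → ℝ} {x : Fin n → Fin d → ℝ}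

lemma gramStack_apply (W : Fin M → Fin d → ℝ) (i k : Fin n) :
    gramStack M d n σ' a x W i k =
      (M : ℝ)⁻¹ * (∑ r, a r ^ 2 * (σ' (W r ⬝ᵥ x i) * σ' (W r ⬝ᵥ x k))) * (x i ⬝ᵥ x k) := by
  have hM : Real.sqrt M * Real.sqrt M = (M : ℝ) := Real.mul_self_sqrt (Nat.cast_nonneg M)
  simp only [gramStack, mul_apply, transpose_apply, jacStack, jacSingle, of_apply,
    Fintype.sum_prod_type, dotProduct, Finset.mul_sum, Finset.sum_mul]
  rw [Finset.sum_comm]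
  refine Finset.sum_congr rfl fun r _ => Finset.sum_congr rfl fun j _ => ?_
  rw [← hM]
  field_simp
  rw [Real.sqrt_sq (Real.sqrt_nonneg _)]

lemma abs_gramStack_sub_apply_le {ℓ β R : ℝ} (hℓ : ∀ t, |σ' t| ≤ ℓ)
    (hβ : ∀ s t, |σ' s - σ' t| ≤ β * |s - t|) (ha : ∀ r, |a r| ≤ 1)
    (hx : ∀ i, eNorm (x i) ≤ 1) {W W₀ : Fin M → Fin d → ℝ}
    (hW : frobNorm (Matrix.of W - Matrix.of W₀) ≤ R) (i k : Fin n) :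
    |(gramStack M d n σ' a x W - gramStack M d n σ' a x W₀) i k| ≤
      2 * ℓ * β * R / Real.sqrt M := by
  have hℓβ := mul_nonneg_of_bounded_lipschitz hℓ hβ
  have hrow : ∀ r, |a r ^ 2 * (σ' (W r ⬝ᵥ x i) * σ' (W r ⬝ᵥ x k) -
      σ' (W₀ r ⬝ᵥ x i) * σ' (W₀ r ⬝ᵥ x k))| ≤ 2 * ℓ * β * eNorm (W r - W₀ r) := by
    intro r
    have ha2 : |a r ^ 2| ≤ 1 := by rw [abs_pow]; exact pow_le_one₀ (abs_nonneg _) (ha r)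
    calc _ ≤ 1 * (ℓ * β * (|W r ⬝ᵥ x i - W₀ r ⬝ᵥ x i| + |W r ⬝ᵥ x k - W₀ r ⬝ᵥ x k|)) := by
          rw [abs_mul]
          exact mul_le_mul ha2 (abs_mul_sub_mul_le hℓ hβ _ _ _ _) (abs_nonneg _) zero_le_one
      _ ≤ 1 * (ℓ * β * (eNorm (W r - W₀ r) + eNorm (W r - W₀ r))) := by
          gcongr <;> exact abs_dotProduct_sub_dotProduct_le _ _ _ (hx _)
      _ = 2 * ℓ * β * eNorm (W r - W₀ r) := by ring
  have hsum : |∑ r, a r ^ 2 * (σ' (W r ⬝ᵥ x i) * σ' (W r ⬝ᵥ x k) -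
      σ' (W₀ r ⬝ᵥ x i) * σ' (W₀ r ⬝ᵥ x k))| ≤ 2 * ℓ * β * (Real.sqrt M * R) := by
    calc _ ≤ ∑ r, 2 * ℓ * β * eNorm (W r - W₀ r) :=
          (Finset.abs_sum_le_sum_abs _ _).trans (Finset.sum_le_sum fun r _ => hrow r)
      _ = 2 * ℓ * β * ∑ r, eNorm ((Matrix.of W - Matrix.of W₀) r) := by
          rw [Finset.mul_sum]; rfl
      _ ≤ 2 * ℓ * β * (Real.sqrt M * R) := by
          have hrows := sum_eNorm_row_le_sqrt_card_mul_frobNorm (Matrix.of W - Matrix.of W₀)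
          rw [Fintype.card_fin] at hrows
          exact mul_le_mul_of_nonneg_left
            (hrows.trans (mul_le_mul_of_nonneg_left hW (Real.sqrt_nonneg _))) (by linarith)
  have hxx : |x i ⬝ᵥ x k| ≤ 1 :=
    (abs_dotProduct_le_eNorm_mul _ _).trans (mul_le_one₀ (hx i) (eNorm_nonneg _) (hx k))
  rw [Matrix.sub_apply, gramStack_apply, gramStack_apply, ← sub_mul, ← mul_sub,
    ← Finset.sum_sub_distrib]
  simp only [← mul_sub]
  calc _ = (M : ℝ)⁻¹ * |∑ r, a r ^ 2 * (σ' (W r ⬝ᵥ x i) * σ' (W r ⬝ᵥ x k) -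
        σ' (W₀ r ⬝ᵥ x i) * σ' (W₀ r ⬝ᵥ x k))| * |x i ⬝ᵥ x k| := by
        rw [abs_mul, abs_mul, abs_of_nonneg (by positivity : (0 : ℝ) ≤ (M : ℝ)⁻¹)]
    _ ≤ (M : ℝ)⁻¹ * (2 * ℓ * β * (Real.sqrt M * R)) * 1 := by
        gcongr
        exact mul_nonneg (by positivity) ((abs_nonneg _).trans hsum)
    _ = 2 * ℓ * β * R * (Real.sqrt M / M) := by ring
    _ = 2 * ℓ * β * R / Real.sqrt M := by rw [Real.sqrt_div_self', mul_one_div]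

lemma specNorm_gramStack_sub_le {ℓ β R : ℝ} (hℓ : ∀ t, |σ' t| ≤ ℓ)
    (hβ : ∀ s t, |σ' s - σ' t| ≤ β * |s - t|) (ha : ∀ r, |a r| ≤ 1)
    (hx : ∀ i, eNorm (x i) ≤ 1) {W W₀ : Fin M → Fin d → ℝ}
    (hW : frobNorm (Matrix.of W - Matrix.of W₀) ≤ R) :
    specNorm (gramStack M d n σ' a x W - gramStack M d n σ' a x W₀) ≤
      2 * ℓ * β * (n * R) / Real.sqrt M := by
  have hK : 0 ≤ 2 * ℓ * β * R / Real.sqrt M := by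
    have := mul_nonneg (mul_nonneg_of_bounded_lipschitz hℓ hβ) ((Real.sqrt_nonneg _).trans hW)
    exact div_nonneg (by linarith) (Real.sqrt_nonneg _)
  calc _ ≤ frobNorm (gramStack M d n σ' a x W - gramStack M d n σ' a x W₀) :=
        specNorm_le_frobNorm _
    _ ≤ Real.sqrt (n * n) * (2 * ℓ * β * R / Real.sqrt M) := by
        simpa only [Fintype.card_fin] using
          frobNorm_le_of_abs_apply_le _ hK (abs_gramStack_sub_apply_le hℓ hβ ha hx hW)
    _ = 2 * ℓ * β * (n * R) / Real.sqrt M := by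
        rw [Real.sqrt_mul_self (Nat.cast_nonneg n)]; ring

end Gram

lemma mul_div_sqrt_le_div_four {c t lam M : ℝ} (hlam : 0 < lam)
    (hM : (16 * c ^ 2 + 1) * t ^ 2 / lam ^ 2 ≤ M) : c * t / Real.sqrt M ≤ lam / 4 := by
  rw [div_le_iff₀ (by positivity)] at hM
  rcases (Real.sqrt_nonneg M).eq_or_lt with hzero | hpos
  · rw [← hzero, div_zero]; positivity
  · have hsq : (4 * (c * t)) ^ 2 ≤ (lam * Real.sqrt M) ^ 2 := by
      rw [mul_pow lam, Real.sq_sqrt (Real.sqrt_pos.mp hpos).le]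
      nlinarith [sq_nonneg t]
    have habs := sq_le_sq.mp hsq
    rw [abs_of_pos (by positivity : 0 < lam * Real.sqrt M)] at habs
    rw [div_le_iff₀ hpos]
    linarith [le_abs_self (4 * (c * t))]

/-- Stability of the Gram matrix in the optimization scope: under the
stated hypotheses at `W₀`, there is `C' > 0` depending only on `ℓ, β, C₀` such that if
`M ≥ C' n² R²/λ₀²`, then every `W` with `‖W − W₀‖_F ≤ R` satisfies
`‖G_W − G_{W₀}‖₂ ≤ λ₀/4`; in particular `G_W` is invertible with least eigenvalue at least
`λ₀/2` and `‖G_W⁻¹‖₂ ≤ 2/λ₀`. -/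
theorem gram_stability_in_scope (ℓ β C₀ : ℝ) :
    ∃ C' : ℝ, 0 < C' ∧
      ∀ (M d n : ℕ) (σ σ' : ℝ → ℝ),
        (∀ t : ℝ, HasDerivAt σ (σ' t) t) →
        (∀ t : ℝ, |σ' t| ≤ ℓ) →
        (∀ s t : ℝ, |σ' s - σ' t| ≤ β * |s - t|) →
        ∀ (a : Fin M → ℝ), (∀ r, a r = 1 ∨ a r = -1) →
        ∀ x : Fin n → Fin d → ℝ, (∀ i, eNorm (x i) ≤ 1) →
        ∀ W₀ : Fin M → Fin d → ℝ,
          (∀ i, frobNorm (jacSingle M d σ' a W₀ (x i)) ≤ C₀) →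
        ∀ lam₀ : ℝ, 0 < lam₀ →
          (∀ v : Fin n → ℝ,
            (3 / 4 : ℝ) * lam₀ * ∑ i, v i ^ 2 ≤
              v ⬝ᵥ (gramStack M d n σ' a x W₀).mulVec v) →
        ∀ R : ℝ, 0 ≤ R →
          C' * n ^ 2 * R ^ 2 / lam₀ ^ 2 ≤ (M : ℝ) →
          ∀ W : Fin M → Fin d → ℝ, frobNorm (Matrix.of W - Matrix.of W₀) ≤ R →
            specNorm (gramStack M d n σ' a x W - gramStack M d n σ' a x W₀) ≤ lam₀ / 4 ∧
            (∀ v : Fin n → ℝ,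
              (lam₀ / 2) * ∑ i, v i ^ 2 ≤ v ⬝ᵥ (gramStack M d n σ' a x W).mulVec v) ∧
            IsUnit (gramStack M d n σ' a x W) ∧
            specNorm (gramStack M d n σ' a x W)⁻¹ ≤ 2 / lam₀ := by
  refine ⟨16 * (2 * ℓ * β) ^ 2 + 1, by positivity, ?_⟩
  intro M d n σ σ' _ hℓ hβ a ha x hx W₀ _ lam₀ hlam hG₀ R _ hM W hW
  have ha' : ∀ r, |a r| ≤ 1 := fun r => by rcases ha r with h | h <;> simp [h]
  have hΔ : specNorm (gramStack M d n σ' a x W - gramStack M d n σ' a x W₀) ≤ lam₀ / 4 :=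
    (specNorm_gramStack_sub_le hℓ hβ ha' hx hW).trans
      (mul_div_sqrt_le_div_four hlam (by rw [mul_pow (n : ℝ), ← mul_assoc]; exact hM))
  have hG : ∀ v : Fin n → ℝ,
      lam₀ / 2 * ∑ i, v i ^ 2 ≤ v ⬝ᵥ (gramStack M d n σ' a x W) *ᵥ v := by
    intro v
    convert coercive_of_specNorm_sub_le hG₀ hΔ v using 2
    ring
  have hhalf : 0 < lam₀ / 2 := half_pos hlam
  refine ⟨hΔ, hG, isUnit_of_coercive hhalf hG, ?_⟩
  simpa only [one_div_div] using specNorm_inv_le_of_coercive hhalf hG
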